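/- Canonically removing a terminal node from a T-tree C not reduced to a single node yields a T-tree C' with C' ⋞ C (and C' ≠ C). -/

import Mathlib

/-- A T-tree: a node labeled by a type (ℕ), with children grouped into
    T-lists (one list per component type, in type order). -/
inductive TTree : Type where
  | node : ℕ → List (List TTree) → TTree

namespace TTree

/-- The root type (label) of a T-tree. -/
def label : TTree → ℕ
  | .node a _ => a

/-- The list of T-lists of a T-tree. -/
def tlists : TTree → List (List TTree)
  | .node _ ls => ls

/-- A T-tree is a leaf iff all its T-lists are empty. -/
def isLeaf : TTree → Bool
  | .node _ ls => ls.all List.isEmpty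

mutual
  /-- Comparison of T-trees: root types first, then the sequences of T-lists
      lexicographically by the T-list order ≪. -/
  def cmpT : TTree → TTree → Ordering
    | .node a ls, .node b ls' => (compare a b).then (cmpOuter ls ls')
  /-- Lexicographic comparison of sequences of T-lists by ≪
      (≪ compares T-lists by length first, then lexicographically by ⋞). -/
  def cmpOuter : List (List TTree) → List (List TTree) → Ordering
    | [], [] => .eq
    | [], _ :: _ => .lt
    | _ :: _, [] => .gt
    | l :: ls, l' :: ls' =>
        (((compare l.length l'.length).then (cmpInner l l')).then (cmpOuter ls ls'))
  /-- Lexicographic comparison of equal-length T-lists by ⋞. -/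
  def cmpInner : List TTree → List TTree → Ordering
    | [], [] => .eq
    | [], _ :: _ => .lt
    | _ :: _, [] => .gt
    | a :: as, b :: bs => (cmpT a b).then (cmpInner as bs)
end

/-- The order ⋞ on T-trees. -/
def le (C C' : TTree) : Prop := cmpT C C' ≠ .gt

/-- The order ≪ on T-lists: length first, then lexicographically by ⋞. -/
def lle (L L' : List TTree) : Prop :=
  ((compare L.length L'.length).then (cmpInner L L')) ≠ .gt

/-- Canonicity of a T-tree: every T-list sorted non-decreasingly by ⋞,
    every subtree canonical. -/
inductive Canonical : TTree → Prop where
  | mk (a : ℕ) (ls : List (List TTree))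
      (hsorted : ∀ L ∈ ls, L.Chain' le)
      (hrec : ∀ L ∈ ls, ∀ c ∈ L, Canonical c) :
      Canonical (.node a ls)

end TTree

namespace TTree

mutual
  /-- Canonical removal of a terminal node from a T-tree. -/
  def remT : TTree → TTree
    | .node a ls => .node a (remOuter ls)
  /-- Select the first non-empty T-list and remove a node from it. -/
  def remOuter : List (List TTree) → List (List TTree)
    | [] => []
    | L :: ls => if L.isEmpty then L :: remOuter ls else remList L :: ls
  /-- In a non-empty T-list: recurse into the first non-leaf tree if one
      exists, otherwise remove the last leaf. -/
  def remList : List TTree → List TTree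
    | [] => []
    | c :: cs =>
        if c.isLeaf then (if cs.isEmpty then [] else c :: remList cs)
        else remT c :: cs
end

mutual
  /-- Number of nodes of a T-tree. -/
  def size : TTree → ℕ
    | .node _ ls => 1 + sizeOuter ls
  def sizeOuter : List (List TTree) → ℕ
    | [] => 0
    | L :: ls => sizeList L + sizeOuter ls
  def sizeList : List TTree → ℕ
    | [] => 0
    | c :: cs => size c + sizeList cs
end

end TTree

namespace TTree

theorem nat_compare_succ (a b : ℕ) : compare (a + 1) (b + 1) = compare a b := by
  simp [Nat.compare_eq_ite_lt]

theorem nat_compare_self (a : ℕ) : compare a a = .eq := by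
  simp [Nat.compare_eq_ite_lt]

theorem ord_eq_then (o : Ordering) : Ordering.eq.then o = o := rfl

theorem ord_lt_then (o : Ordering) : Ordering.lt.then o = .lt := rfl

mutual
  theorem cmpT_refl : ∀ C : TTree, cmpT C C = .eq
    | .node a ls => by
        rw [cmpT, nat_compare_self, ord_eq_then, cmpOuter_refl]
  theorem cmpOuter_refl : ∀ ls : List (List TTree), cmpOuter ls ls = .eq
    | [] => rfl
    | L :: ls => by
        rw [cmpOuter, nat_compare_self, ord_eq_then, cmpInner_refl,
          ord_eq_then, cmpOuter_refl]
  theorem cmpInner_refl : ∀ L : List TTree, cmpInner L L = .eq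
    | [] => rfl
    | c :: cs => by
        rw [cmpInner, cmpT_refl, ord_eq_then, cmpInner_refl]
end

mutual
  theorem remT_lt : ∀ C : TTree, C.isLeaf = false → cmpT (remT C) C = .lt
    | .node a ls, h => by
        rw [remT, cmpT, nat_compare_self, ord_eq_then]
        exact remOuter_lt ls (by simpa [isLeaf] using h)
  theorem remOuter_lt : ∀ ls : List (List TTree),
      (ls.all List.isEmpty) = false → cmpOuter (remOuter ls) ls = .lt
    | [], h => by simp at h
    | L :: ls, h => by
        rw [remOuter]
        by_cases hL : L.isEmpty
        · have hls : ls.all List.isEmpty = false := by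
            simpa [List.all_cons, hL] using h
          rw [if_pos hL, cmpOuter, nat_compare_self, ord_eq_then,
            cmpInner_refl, ord_eq_then]
          exact remOuter_lt ls hls
        · rw [if_neg hL, cmpOuter, remList_lt L (by simpa using hL),
            ord_lt_then]
  theorem remList_lt : ∀ L : List TTree, L ≠ [] →
      ((compare (remList L).length L.length).then (cmpInner (remList L) L)) = .lt
    | c :: cs, _ => by
        rw [remList]
        by_cases hc : c.isLeaf
        · rw [if_pos hc]
          by_cases hcs : cs.isEmpty
          · rw [if_pos hcs]
            rcases List.isEmpty_iff.mp hcs with rfl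
            rfl
          · rw [if_neg hcs]
            have := remList_lt cs (by simpa using hcs)
            rw [List.length_cons, List.length_cons, nat_compare_succ,
              cmpInner, cmpT_refl, ord_eq_then]
            exact this
        · rw [if_neg hc, List.length_cons, List.length_cons, nat_compare_succ,
            nat_compare_self, ord_eq_then, cmpInner,
            remT_lt c (by simpa using hc), ord_lt_then]
end

end TTree

/-- Canonically removing a terminal node from a T-tree `C` not reduced to a
    single node yields a T-tree `C' = remT C` with `C' ⋞ C` and `C' ≠ C`. -/
theorem remT_le :
    ∀ C : TTree, C.isLeaf = false →
      TTree.le (TTree.remT C) C ∧ TTree.remT C ≠ C := by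
  intro C h
  have hlt := TTree.remT_lt C h
  refine ⟨by simp [TTree.le, hlt], fun heq => ?_⟩
  rw [heq, TTree.cmpT_refl] at hlt
  exact absurd hlt (by decide)
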